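/- Let S and A be nonempty types, r̃ : S × A → ℝ a bounded reward function, T : S × A → S, T̂ : S × A → Set S with T̂(s,a) nonempty for all (s,a), and γ ∈ [0,1). Assume T̂ is calibrated, i.e., T(s,a) ∈ T̂(s,a) for all (s,a). If Q̲ : S × A → ℝ is a bounded fixed point of the Bellmin operator B̲ and Q̃ : S × A → ℝ is a bounded fixed point of the Bellman operator B̃, then Q̲(s,a) ≤ Q̃(s,a) for all (s,a). -/

import Mathlib

/-!
Let `d` be the supremum of `Q̲ - Q̃`. Calibration lets the infimum over `T̂(s,a)` in `B̲` be
bounded by its value at the true successor `T(s,a)`, so `Q̲ = B̲Q̲ ≤ B̃Q̲ ≤ B̃Q̃ + γd = Q̃ + γd`.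
Taking the supremum gives `d ≤ γd`, hence `d ≤ 0` since `γ < 1`.
-/

/-- The Bellmin operator: `(B̲Q)(s,a) = r̃(s,a) + γ · inf_{s' ∈ T̂(s,a)} sup_{a' ∈ A} Q(s',a')`. -/
noncomputable def bellmin {S A : Type*} (rt : S × A → ℝ) (That : S × A → Set S)
    (γ : ℝ) (Q : S × A → ℝ) : S × A → ℝ :=
  fun p => rt p + γ * ⨅ s' : That p, ⨆ a' : A, Q (s'.1, a')

/-- The Bellman operator with true dynamics:
`(B̃Q)(s,a) = r̃(s,a) + γ · sup_{a' ∈ A} Q(T(s,a),a')`. -/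
noncomputable def bellman {S A : Type*} (rt : S × A → ℝ) (T : S × A → S)
    (γ : ℝ) (Q : S × A → ℝ) : S × A → ℝ :=
  fun p => rt p + γ * ⨆ a' : A, Q (T p, a')

open Set

theorem le_zero_of_le_mul_ciSup {ι : Type*} {f : ι → ℝ} {γ : ℝ} (hf : BddAbove (range f))
    (hγ : γ < 1) (h : ∀ i, f i ≤ γ * ⨆ j, f j) (i : ι) : f i ≤ 0 := by
  have : Nonempty ι := ⟨i⟩
  have hsup : ⨆ j, f j ≤ γ * ⨆ j, f j := ciSup_le h
  have hsup_nonpos : ⨆ j, f j ≤ 0 := by nlinarith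
  exact (le_ciSup hf i).trans hsup_nonpos

theorem ciSup_le_ciSup_add {ι : Type*} [Nonempty ι] {f g : ι → ℝ} {c : ℝ}
    (hg : BddAbove (range g)) (h : ∀ i, f i ≤ g i + c) : ⨆ i, f i ≤ (⨆ i, g i) + c :=
  ciSup_le fun i => (h i).trans (add_le_add_left (le_ciSup hg i) c)

section Operators

variable {S A : Type*} (rt : S × A → ℝ) {γ : ℝ}

theorem bellmin_le_bellman {That : S × A → Set S} {T : S × A → S} {Q : S × A → ℝ} {M : ℝ}
    (hγ : 0 ≤ γ) (hQ : ∀ q, |Q q| ≤ M) {p : S × A} (hcal : T p ∈ That p) :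
    bellmin rt That γ Q p ≤ bellman rt T γ Q p := by
  have : Nonempty A := ⟨p.2⟩
  have hQ_bddAbove (s : S) : BddAbove (range fun a => Q (s, a)) :=
    ⟨M, by rintro _ ⟨a, rfl⟩; exact (abs_le.mp (hQ (s, a))).2⟩
  have hsup_ge (s : S) : -M ≤ ⨆ a, Q (s, a) :=
    le_ciSup_of_le (hQ_bddAbove s) p.2 (abs_le.mp (hQ (s, p.2))).1
  have hinf_le : ⨅ s' : That p, ⨆ a, Q (s'.1, a) ≤ ⨆ a, Q (T p, a) :=
    ciInf_le ⟨-M, by rintro _ ⟨s', rfl⟩; exact hsup_ge s'.1⟩ (⟨T p, hcal⟩ : That p)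
  exact add_le_add_right (mul_le_mul_of_nonneg_left hinf_le hγ) _

theorem bellman_le_bellman_add (T : S × A → S) {Q₁ Q₂ : S × A → ℝ} {c : ℝ} (hγ : 0 ≤ γ)
    (hQ₂ : BddAbove (range Q₂)) (h : ∀ q, Q₁ q ≤ Q₂ q + c) (p : S × A) :
    bellman rt T γ Q₁ p ≤ bellman rt T γ Q₂ p + γ * c := by
  have : Nonempty A := ⟨p.2⟩
  have hsup : ⨆ a, Q₁ (T p, a) ≤ (⨆ a, Q₂ (T p, a)) + c :=
    ciSup_le_ciSup_add (hQ₂.mono (range_comp_subset_range _ Q₂)) fun a => h (T p, a)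
  calc bellman rt T γ Q₁ p ≤ rt p + γ * ((⨆ a, Q₂ (T p, a)) + c) :=
        add_le_add_right (mul_le_mul_of_nonneg_left hsup hγ) _
    _ = bellman rt T γ Q₂ p + γ * c := by simp only [bellman]; ring

end Operators

theorem bellmin_fixed_le_bellman_fixed_general {S A : Type*}
    (rt : S × A → ℝ)
    (T : S × A → S) (That : S × A → Set S)
    (γ : ℝ) (hγ0 : 0 ≤ γ) (hγ1 : γ < 1)
    (hcal : ∀ p, T p ∈ That p)
    (Qlow Qtil : S × A → ℝ) (M M' : ℝ)
    (hQlow : ∀ p, |Qlow p| ≤ M) (hQtil : ∀ p, |Qtil p| ≤ M')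
    (hfixlow : bellmin rt That γ Qlow = Qlow)
    (hfixtil : bellman rt T γ Qtil = Qtil) :
    ∀ p, Qlow p ≤ Qtil p := by
  have hQtil_bdd : BddAbove (range Qtil) :=
    ⟨M', by rintro _ ⟨q, rfl⟩; exact (abs_le.mp (hQtil q)).2⟩
  have hdiff_bdd : BddAbove (range fun q => Qlow q - Qtil q) :=
    ⟨M + M', by
      rintro _ ⟨q, rfl⟩
      linarith [(abs_le.mp (hQlow q)).2, (abs_le.mp (hQtil q)).1]⟩
  set d := ⨆ q, (Qlow q - Qtil q)
  have hcontract (q : S × A) : Qlow q - Qtil q ≤ γ * d := by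
    have hle_sup (q' : S × A) : Qlow q' ≤ Qtil q' + d := by linarith [le_ciSup hdiff_bdd q']
    rw [sub_le_iff_le_add']
    calc Qlow q = bellmin rt That γ Qlow q := (congrFun hfixlow q).symm
      _ ≤ bellman rt T γ Qlow q := bellmin_le_bellman rt hγ0 hQlow (hcal q)
      _ ≤ bellman rt T γ Qtil q + γ * d := bellman_le_bellman_add rt T hγ0 hQtil_bdd hle_sup q
      _ = Qtil q + γ * d := by rw [hfixtil]
  intro p
  linarith [le_zero_of_le_mul_ciSup hdiff_bdd hγ1 hcontract p]

/-- If `T̂` is calibrated, a bounded fixed point of the Bellmin operator is pointwise a lower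
bound on a bounded fixed point of the Bellman operator. -/
theorem bellmin_fixed_le_bellman_fixed {S A : Type*} [Nonempty S] [Nonempty A]
    (rt : S × A → ℝ) (R : ℝ) (hr : ∀ p, |rt p| ≤ R)
    (T : S × A → S) (That : S × A → Set S)
    (hT : ∀ p, (That p).Nonempty)
    (γ : ℝ) (hγ0 : 0 ≤ γ) (hγ1 : γ < 1)
    (hcal : ∀ p, T p ∈ That p)
    (Qlow Qtil : S × A → ℝ) (M M' : ℝ)
    (hQlow : ∀ p, |Qlow p| ≤ M) (hQtil : ∀ p, |Qtil p| ≤ M')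
    (hfixlow : bellmin rt That γ Qlow = Qlow)
    (hfixtil : bellman rt T γ Qtil = Qtil) :
    ∀ p, Qlow p ≤ Qtil p :=
  bellmin_fixed_le_bellman_fixed_general rt T That γ hγ0 hγ1 hcal Qlow Qtil M M' hQlow hQtil hfixlow
    hfixtil
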